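/- arXiv:1002.1768 — 3 statements merged into one kernel-verified Lean document; each statement's English description precedes it below -/
import Mathlib

section
/- Let G be a finite group and N a normal subgroup of G such that G/N is cyclic. Suppose that for each irreducible complex character χ of N there is given an irreducible character E(χ) of G with E(χ)|_N = χ. Then the map (χ, β) ↦ E(χ)·(β ∘ π), from Irr(N) × Hom(G/N, ℂˣ) to Irr(G), is a bijection, where π : G → G/N is the quotient map and the product of characters is the pointwise product. -/
open scoped BigOperators

/-- `χ` is an irreducible complex character of the finite group `G`:
it is the character of some simple finite-dimensional complex representation of `G`. -/
def IsIrrChar (G : Type) [Group G] (χ : G → ℂ) : Prop :=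
  ∃ V : FDRep ℂ G, CategoryTheory.Simple V ∧ ∀ g : G, V.character g = χ g

/-!
Write `⟨φ, ψ⟩ = ∑ g, φ g * ψ g⁻¹`; on irreducible characters it is `|G|` if they are equal and
`0` otherwise. Twisting by a linear character `λ` preserves `⟨θ, θ⟩`, hence irreducibility.
Since `G/N` is abelian, `∑ β, β (g N)` is `|G/N|` on `N` and `0` off `N`, so
`∑ β, ⟨θ·β, ψ⟩ = |G/N| · ∑_{x ∈ N} θ x * ψ x⁻¹`.
For `θ = E χ` and `ψ = θ` the right side is `|G/N| · |N| = |G|`, so `θ·β = θ` for exactly one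
`β`, namely `β = 1`;
together with `(E χ · β)|_N = χ` this gives injectivity. For `ψ` irreducible, taking for `χ` an
irreducible constituent of `ψ|_N` makes the right side nonzero, so `ψ = E χ · β` for some `β`.
-/

universe u

open CategoryTheory Limits Module

def Representation.twist {k G V : Type*} [Field k] [Group G] [AddCommGroup V] [Module k V]
    (ρ : Representation k G V) (χ : G →* kˣ) : Representation k G V where
  toFun g := (χ g : k) • ρ g
  map_one' := by simp
  map_mul' g h := by simp only [map_mul, Units.val_mul, smul_mul_smul_comm]

namespace FDRep

variable {k G : Type u} [Field k] [Group G]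

theorem isZero_iff_finrank_eq_zero (V : FDRep k G) : IsZero V ↔ finrank k V = 0 := by
  rw [IsZero.iff_id_eq_zero, finrank_zero_iff, subsingleton_iff_forall_eq 0]
  constructor
  · intro h x
    exact congr(($h).hom x)
  · intro h
    ext x
    exact h x

theorem injective_of_mono {V W : FDRep k G} (f : V ⟶ W) [Mono f] : Function.Injective f.hom :=
  (Rep.mono_iff_injective _).1 (Functor.map_mono (forget₂ (FDRep k G) (Rep k G)) f)

theorem epi_of_surjective {V W : FDRep k G} (f : V ⟶ W) (hf : Function.Surjective f.hom) :
    Epi f :=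
  (forget₂ (FDRep k G) (Rep k G)).epi_of_epi_map ((Rep.epi_iff_surjective _).2 hf)

theorem finrank_lt_of_mono_of_not_isIso {V W : FDRep k G} (f : V ⟶ W) [Mono f] (hf : ¬IsIso f) :
    finrank k V < finrank k W := by
  have hinj : Function.Injective f.hom.hom.hom := injective_of_mono f
  refine (LinearMap.finrank_le_finrank_of_injective hinj).lt_of_ne fun h => hf ?_
  have := epi_of_surjective f ((LinearMap.injective_iff_surjective_of_finrank_eq_finrank h).1 hinj)
  exact isIso_of_mono_of_epi f

theorem exists_mono_not_isIso_of_not_simple {V : FDRep k G} (hV : ¬IsZero V) (hs : ¬Simple V) :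
    ∃ (Y : FDRep k G) (f : Y ⟶ V), Mono f ∧ f ≠ 0 ∧ ¬IsIso f := by
  by_contra! h
  refine hs ⟨fun {Y} f _ => ⟨fun hf hf0 => hV ?_, h Y f inferInstance⟩⟩
  subst hf0
  exact ((isIsoZero_iff_source_target_isZero Y V).1 hf).2

theorem exists_simple_hom_ne_zero (V : FDRep k G) (hV : ¬IsZero V) :
    ∃ W : FDRep k G, Simple W ∧ ∃ f : W ⟶ V, f ≠ 0 := by
  induction hn : finrank k V using Nat.strong_induction_on generalizing V with
  | _ n ih =>
  by_cases hs : Simple V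
  · exact ⟨V, hs, 𝟙 V, id_nonzero V⟩
  obtain ⟨Y, f, _, hf0, hf⟩ := exists_mono_not_isIso_of_not_simple hV hs
  obtain ⟨W, hW, g, hg⟩ :=
    ih _ (hn ▸ finrank_lt_of_mono_of_not_isIso f hf) Y (fun hY => hf0 (hY.eq_of_src _ _)) rfl
  exact ⟨W, hW, g ≫ f, fun h => hg ((cancel_mono f).1 (h.trans zero_comp.symm))⟩

theorem char_of_twist (V : FDRep k G) (χ : G →* kˣ) (g : G) :
    (FDRep.of (Representation.twist V.ρ χ)).character g = χ g * V.character g :=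
  map_smul (LinearMap.trace k V) (χ g : k) (V.ρ g)

theorem simple_twist [IsAlgClosed k] [CharZero k] [Fintype G] (V : FDRep k G) [Simple V]
    (χ : G →* kˣ) : Simple (FDRep.of (Representation.twist V.ρ χ)) := by
  rw [simple_iff_char_is_norm_one, ← (simple_iff_char_is_norm_one V).1 ‹_›]
  refine Finset.sum_congr rfl fun g _ => ?_
  rw [char_of_twist, char_of_twist, mul_mul_mul_comm, ← Units.val_mul, ← map_mul,
    mul_inv_cancel, map_one, Units.val_one, one_mul]

end FDRep

theorem sum_mul_inv_comm {G R : Type*} [Group G] [Fintype G] [CommSemiring R] (χ ψ : G → R) :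
    ∑ g, χ g * ψ g⁻¹ = ∑ g, ψ g * χ g⁻¹ :=
  Fintype.sum_equiv (Equiv.inv G) _ _ fun g => by simp [mul_comm]

theorem sum_monoidHom_units_apply_eq_ite {Q : Type*} [CommGroup Q] [Finite Q]
    [Fintype (Q →* ℂˣ)] [DecidableEq Q] (c : Q) :
    ∑ β : Q →* ℂˣ, (β c : ℂ) = if c = 1 then (Nat.card Q : ℂ) else 0 := by
  classical
  have hev : (Units.coeHom ℂ).comp (MonoidHom.eval c) = 1 ↔ c = 1 := by
    rw [← CommGroup.forall_apply_eq_apply_iff Q (M := ℂ) (g' := 1), DFunLike.ext_iff]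
    simp only [MonoidHom.coe_comp, Function.comp_apply, MonoidHom.eval_apply_apply,
      Units.coeHom_apply, MonoidHom.one_apply, map_one, Units.val_eq_one]
  have h := sum_hom_units ((Units.coeHom ℂ).comp (MonoidHom.eval c))
  simp only [MonoidHom.coe_comp, Function.comp_apply, MonoidHom.eval_apply_apply,
    Units.coeHom_apply, hev] at h
  rw [h, ← Nat.card_eq_fintype_card, CommGroup.card_monoidHom_of_hasEnoughRootsOfUnity]
  split_ifs <;> simp

open scoped IsMulCommutative in
theorem sum_monoidHom_sum_mul_quotient_mk {G : Type*} [Group G] [Fintype G] (N : Subgroup G)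
    [N.Normal] [IsMulCommutative (G ⧸ N)] [Fintype N] [Fintype ((G ⧸ N) →* ℂˣ)] (u v : G → ℂ) :
    ∑ β : (G ⧸ N) →* ℂˣ, ∑ g, u g * β (g : G ⧸ N) * v g
      = Nat.card (G ⧸ N) * ∑ x : N, u x * v x := by
  classical
  have hβ (g : G) : ∑ β : (G ⧸ N) →* ℂˣ, u g * β (g : G ⧸ N) * v g
      = if g ∈ N then Nat.card (G ⧸ N) * (u g * v g) else 0 := by
    simp_rw [mul_right_comm _ _ (v g), ← Finset.mul_sum, sum_monoidHom_units_apply_eq_ite,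
      QuotientGroup.eq_one_iff]
    split_ifs <;> ring
  rw [Finset.sum_comm, Finset.sum_congr rfl fun g _ => hβ g, ← Finset.sum_filter, Finset.mul_sum]
  exact Finset.sum_subtype _ (by simp) fun g => (Nat.card (G ⧸ N) : ℂ) * (u g * v g)

namespace IsIrrChar

variable {G : Type} [Group G]

theorem mul_monoidHom [Finite G] {χ : G → ℂ} (hχ : IsIrrChar G χ) (β : G →* ℂˣ) :
    IsIrrChar G fun g => χ g * β g := by
  have := Fintype.ofFinite G
  obtain ⟨V, hV, hVχ⟩ := hχ
  refine ⟨FDRep.of (Representation.twist V.ρ β), FDRep.simple_twist V β, fun g => ?_⟩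
  rw [FDRep.char_of_twist, hVχ, mul_comm]

theorem sum_mul_inv_eq_ite [Fintype G] {χ ψ : G → ℂ} (hχ : IsIrrChar G χ)
    (hψ : IsIrrChar G ψ) :
    ∑ g, χ g * ψ g⁻¹ = if χ = ψ then (Nat.card G : ℂ) else 0 := by
  obtain ⟨V, hV, hVχ⟩ := hχ
  obtain ⟨W, hW, hWψ⟩ := hψ
  obtain rfl : χ = V.character := funext fun g => (hVχ g).symm
  obtain rfl : ψ = W.character := funext fun g => (hWψ g).symm
  split_ifs with h
  · rw [← h]
    exact (FDRep.simple_iff_char_is_norm_one V).1 hV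
  · have := invertibleOfNonzero (NeZero.ne (Nat.card G : ℂ))
    have := FDRep.char_orthonormal V W
    rw [if_neg fun ⟨i⟩ => h (FDRep.char_iso i)] at this
    simpa using this

theorem exists_isIrrChar_sum_mul_inv_ne_zero [Fintype G] {χ : G → ℂ} (hχ : IsIrrChar G χ)
    (H : Subgroup G) [Fintype H] :
    ∃ ψ : H → ℂ, IsIrrChar H ψ ∧ ∑ x : H, χ x * ψ x⁻¹ ≠ 0 := by
  obtain ⟨V, hV, hVχ⟩ := hχ
  let R := FDRep.of (V.ρ.comp H.subtype)
  have hR : ¬IsZero R := by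
    rw [FDRep.isZero_iff_finrank_eq_zero]
    exact (FDRep.isZero_iff_finrank_eq_zero V).not.1 (Simple.not_isZero V)
  obtain ⟨W, hW, f, hf⟩ := FDRep.exists_simple_hom_ne_zero R hR
  refine ⟨W.character, ⟨W, hW, fun _ => rfl⟩, fun h0 => ?_⟩
  have := invertibleOfNonzero (NeZero.ne (Nat.card H : ℂ))
  have hdim := FDRep.scalar_product_char_eq_finrank_equivariant W R
  have hRχ (x : H) : R.character x = χ x := hVχ x
  simp_rw [hRχ, h0, mul_zero] at hdim
  have hpos : 0 < finrank ℂ (W ⟶ R) := finrank_pos_iff_exists_ne_zero.2 ⟨f, hf⟩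
  exact hpos.ne' (by exact_mod_cast hdim.symm)

end IsIrrChar

section Twist

variable {G : Type} [Group G] (N : Subgroup G) [N.Normal]

theorem mul_apply_mk_of_mem (θ : G → ℂ) (β : (G ⧸ N) →* ℂˣ) {g : G} (hg : g ∈ N) :
    θ g * β (g : G ⧸ N) = θ g := by
  rw [(QuotientGroup.eq_one_iff g).2 hg, map_one, Units.val_one, mul_one]

theorem sum_twist_mul_inv_eq_ite [Fintype G] {θ ψ : G → ℂ} (hθ : IsIrrChar G θ)
    (hψ : IsIrrChar G ψ) (β : (G ⧸ N) →* ℂˣ) :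
    ∑ g, θ g * β (g : G ⧸ N) * ψ g⁻¹
      = if (fun g => θ g * β (g : G ⧸ N)) = ψ then (Nat.card G : ℂ) else 0 :=
  (hθ.mul_monoidHom (β.comp (QuotientGroup.mk' N))).sum_mul_inv_eq_ite hψ

variable [Fintype G] [IsMulCommutative (G ⧸ N)] [Fintype N] [Fintype ((G ⧸ N) →* ℂˣ)]

theorem twist_eq_self_iff {θ : G → ℂ} (hθ : IsIrrChar G θ) (hres : IsIrrChar N fun x => θ x)
    (β : (G ⧸ N) →* ℂˣ) : (fun g => θ g * β (g : G ⧸ N)) = θ ↔ β = 1 := by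
  refine ⟨fun hβ => ?_, fun hβ => by simp [hβ]⟩
  have hsum := sum_monoidHom_sum_mul_quotient_mk N θ (fun g => θ g⁻¹)
  simp only [sum_twist_mul_inv_eq_ite N hθ hθ, Finset.sum_ite, Finset.sum_const_zero, add_zero,
    Finset.sum_const, nsmul_eq_mul] at hsum
  have hN : ∑ x : N, θ x * θ (x : G)⁻¹ = Nat.card N := by
    simpa using hres.sum_mul_inv_eq_ite hres
  have hG : (Nat.card (G ⧸ N) : ℂ) * Nat.card N = Nat.card G := by
    rw [← Nat.cast_mul, ← Subgroup.card_eq_card_quotient_mul_card_subgroup]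
  rw [hN, hG] at hsum
  have hcard : (Finset.univ.filter fun γ : (G ⧸ N) →* ℂˣ =>
      (fun g => θ g * γ (g : G ⧸ N)) = θ).card = 1 := by
    exact_mod_cast mul_right_cancel₀ (NeZero.ne (Nat.card G : ℂ)) (hsum.trans (one_mul _).symm)
  exact Finset.card_le_one.1 hcard.le β (by simpa using hβ) 1 (by simp)

theorem twist_injective {θ : G → ℂ} (hθ : IsIrrChar G θ) (hres : IsIrrChar N fun x => θ x) :
    Function.Injective fun β : (G ⧸ N) →* ℂˣ => fun g => θ g * β (g : G ⧸ N) := by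
  intro β₁ β₂ h
  rw [← mul_inv_eq_one, ← twist_eq_self_iff N hθ hres]
  funext g
  simp only [MonoidHom.mul_apply, MonoidHom.inv_apply, Units.val_mul, ← mul_assoc, congrFun h g]
  simp

theorem exists_twist_eq {θ ψ : G → ℂ} (hθ : IsIrrChar G θ) (hψ : IsIrrChar G ψ)
    (h : ∑ x : N, θ x * ψ (x : G)⁻¹ ≠ 0) :
    ∃ β : (G ⧸ N) →* ℂˣ, (fun g => θ g * β (g : G ⧸ N)) = ψ := by
  have hsum := sum_monoidHom_sum_mul_quotient_mk N θ (fun g => ψ g⁻¹)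
  obtain ⟨β, -, hβ⟩ := Finset.exists_ne_zero_of_sum_ne_zero
    (hsum ▸ mul_ne_zero (Nat.cast_ne_zero.2 Nat.card_pos.ne') h)
  refine ⟨β, by_contra fun hne => hβ ?_⟩
  rw [sum_twist_mul_inv_eq_ite N hθ hψ, if_neg hne]

end Twist

/-- Let `G` be a finite group and `N` a normal subgroup of `G` such that `G/N` is cyclic.
Suppose that for each irreducible complex character `χ` of `N` there is given an irreducible
character `E χ` of `G` with `(E χ)|_N = χ`.  Then the map `(χ, β) ↦ (E χ)·(β ∘ π)`, from
`Irr(N) × Hom(G/N, ℂˣ)` to `Irr(G)`, is a bijection (it is injective and its range is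
exactly the set of irreducible characters of `G`). -/
theorem mckay_stmt1 (G : Type) [Group G] [Finite G] (N : Subgroup G) [N.Normal]
    (hcyc : IsCyclic (G ⧸ N))
    (E : {χ : N → ℂ // IsIrrChar N χ} → (G → ℂ))
    (hE_irr : ∀ χ, IsIrrChar G (E χ))
    (hE_res : ∀ χ, ∀ x : N, E χ (x : G) = (χ : N → ℂ) x) :
    Function.Injective
      (fun p : {χ : N → ℂ // IsIrrChar N χ} × ((G ⧸ N) →* ℂˣ) =>
        (fun g => E p.1 g * (p.2 (QuotientGroup.mk g) : ℂ) : G → ℂ)) ∧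
    Set.range
      (fun p : {χ : N → ℂ // IsIrrChar N χ} × ((G ⧸ N) →* ℂˣ) =>
        (fun g => E p.1 g * (p.2 (QuotientGroup.mk g) : ℂ) : G → ℂ))
      = {θ : G → ℂ | IsIrrChar G θ} := by
  have := Fintype.ofFinite G
  have := Fintype.ofFinite N
  have := Fintype.ofFinite ((G ⧸ N) →* ℂˣ)
  have hres (χ) : (fun x : N => E χ x) = χ := funext (hE_res χ)
  refine ⟨fun ⟨χ₁, β₁⟩ ⟨χ₂, β₂⟩ h => ?_, Set.eq_of_subset_of_subset ?_ fun ψ hψ => ?_⟩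
  · obtain rfl : χ₁ = χ₂ := by
      apply Subtype.ext
      rw [← hres χ₁, ← hres χ₂]
      funext x
      simpa only [mul_apply_mk_of_mem N _ _ x.2] using congrFun h x
    exact Prod.ext rfl (twist_injective N (hE_irr χ₁) (hres χ₁ ▸ χ₁.2) h)
  · rintro _ ⟨⟨χ, β⟩, rfl⟩
    exact (hE_irr χ).mul_monoidHom (β.comp (QuotientGroup.mk' N))
  · obtain ⟨χ, hχ, hsum⟩ := hψ.exists_isIrrChar_sum_mul_inv_ne_zero N
    obtain ⟨β, hβ⟩ := exists_twist_eq N (hE_irr ⟨χ, hχ⟩) hψ (by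
      rw [sum_mul_inv_comm] at hsum
      simpa [hE_res] using hsum)
    exact ⟨(⟨χ, hχ⟩, β), hβ⟩
end

section
/- Let G be a finite group and N a normal subgroup of G such that G/N is cyclic and every irreducible complex character of N is extendible to G. Then for every irreducible character θ of G, the restriction θ|_N is an irreducible character of N. -/
/-!
Let `θ` be the character of a simple `G`-module `V`, let `W` be an irreducible `N`-submodule
of `V`, and let `U` be a simple `G`-module whose character extends that of `W`. Then
`Hom_N(U, V) ≠ 0`, its dimension being `⟨χ_W, θ_N⟩`. The group `G` acts on `Hom_N(U, V)` by
conjugation, with `N` acting trivially, so an eigenvector `ψ` of a generator of the cyclic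
group `G ⧸ N` is moved by every element of `G` only by a scalar. Then `ker ψ` and `im ψ` are
`G`-submodules, so `ψ` is an `N`-isomorphism `U ≅ V` and `θ_N = χ_U|_N = χ_W`.
-/

open CategoryTheory Module Representation

namespace Subrepresentation

variable {k G V : Type*} [Field k] [Monoid G] [AddCommGroup V] [Module k V]
  {ρ : Representation k G V}

theorem eq_bot_iff (p : Subrepresentation ρ) : p = ⊥ ↔ ∀ v ∈ p, v = 0 := by
  rw [← toSubmodule_injective.eq_iff]
  exact Submodule.eq_bot_iff _

theorem eq_top_iff' (p : Subrepresentation ρ) : p = ⊤ ↔ ∀ v, v ∈ p := by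
  rw [← toSubmodule_injective.eq_iff]
  exact Submodule.eq_top_iff'

instance [Nontrivial V] : Nontrivial (Subrepresentation ρ) := by
  refine ⟨⊥, ⊤, fun h ↦ ?_⟩
  obtain ⟨v, hv⟩ := exists_ne (0 : V)
  exact hv ((eq_bot_iff ⊤).mp h.symm v True.intro)

instance [FiniteDimensional k V] : WellFoundedLT (Subrepresentation ρ) :=
  StrictMono.wellFoundedLT (f := toSubmodule) fun _ _ h ↦ h

theorem isIrreducible_toRepresentation_of_isAtom {p : Subrepresentation ρ} (hp : IsAtom p) :
    p.toRepresentation.IsIrreducible := by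
  have : Nontrivial p.toSubmodule := by
    rw [Submodule.nontrivial_iff_ne_bot]
    exact fun h ↦ hp.1 (toSubmodule_injective h)
  refine ⟨fun q ↦ ?_⟩
  let q' : Subrepresentation ρ :=
    ⟨q.toSubmodule.map p.toSubmodule.subtype, by
      rintro g _ ⟨v, hv, rfl⟩
      exact ⟨_, q.apply_mem_toSubmodule g hv, rfl⟩⟩
  have hq' : q' ≤ p := by
    rintro _ ⟨v, -, rfl⟩
    exact v.2
  rcases hp.le_iff.mp hq' with h | h
  · left
    rw [eq_bot_iff] at h ⊢
    exact fun v hv ↦ Subtype.ext (h v ⟨v, hv, rfl⟩)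
  · right
    rw [eq_top_iff']
    intro v
    have hv : v.1 ∈ q' := by rw [h]; exact v.2
    obtain ⟨w, hw, hwv⟩ := hv
    rwa [← Subtype.ext hwv]

def subtype (p : Subrepresentation ρ) : IntertwiningMap p.toRepresentation ρ :=
  ⟨p.toSubmodule.subtype, fun _ ↦ rfl⟩

theorem subtype_injective (p : Subrepresentation ρ) : Function.Injective p.subtype :=
  Subtype.val_injective

theorem subtype_ne_zero (p : Subrepresentation ρ) [Nontrivial p.toSubmodule] : p.subtype ≠ 0 :=
  fun h ↦ by
    obtain ⟨w, hw⟩ := exists_ne (0 : p.toSubmodule)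
    exact hw (Subtype.ext (DFunLike.congr_fun h w))

variable (ρ) in
theorem exists_isIrreducible_toRepresentation [FiniteDimensional k V] [Nontrivial V] :
    ∃ p : Subrepresentation ρ, p.toRepresentation.IsIrreducible :=
  (IsAtomic.exists_atom (Subrepresentation ρ)).imp
    fun _ ↦ isIrreducible_toRepresentation_of_isAtom

end Subrepresentation

namespace Representation

section Irreducible

variable {k G V W : Type*} [Field k] [Group G] [AddCommGroup V] [Module k V]
  [AddCommGroup W] [Module k W] {ρ : Representation k G V} {σ : Representation k G W}

instance [FiniteDimensional k V] [FiniteDimensional k W] :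
    FiniteDimensional k (IntertwiningMap ρ σ) :=
  Module.Finite.equiv (invariantsEquivIntertwiningMap ρ σ)

theorem IsIrreducible.nontrivial [ρ.IsIrreducible] : Nontrivial V := by
  by_contra h
  rw [not_nontrivial_iff_subsingleton] at h
  exact bot_ne_top (α := Subrepresentation ρ)
    (Subrepresentation.toSubmodule_injective (Subsingleton.elim _ _))

theorem bijective_of_forall_linHom_apply_eq_smul [ρ.IsIrreducible] [σ.IsIrreducible]
    {ψ : V →ₗ[k] W} (hψ : ψ ≠ 0) (h : ∀ g, ∃ c : k, linHom ρ σ g ψ = c • ψ) :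
    Function.Bijective ψ := by
  have key : ∀ g v, ∃ c : k, σ g (ψ v) = c • ψ (ρ g v) := fun g v ↦ by
    obtain ⟨c, hc⟩ := h g
    refine ⟨c, ?_⟩
    simpa [linHom_apply] using LinearMap.congr_fun hc (ρ g v)
  let K : Subrepresentation ρ := ⟨LinearMap.ker ψ, fun g v (hv : ψ v = 0) ↦ by
    obtain ⟨c, hc⟩ := key g⁻¹ (ρ g v)
    rw [inv_self_apply, hv, smul_zero] at hc
    simpa using congr_arg (σ g) hc⟩
  let R : Subrepresentation σ := ⟨LinearMap.range ψ, by
    rintro g _ ⟨v, rfl⟩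
    obtain ⟨c, hc⟩ := key g v
    exact ⟨c • ρ g v, by rw [hc, map_smul]⟩⟩
  refine ⟨?_, ?_⟩
  · rcases IsSimpleOrder.eq_bot_or_eq_top K with hK | hK
    · exact LinearMap.ker_eq_bot.mp (congr_arg Subrepresentation.toSubmodule hK)
    · exact absurd (LinearMap.ker_eq_top.mp (congr_arg Subrepresentation.toSubmodule hK)) hψ
  · rcases IsSimpleOrder.eq_bot_or_eq_top R with hR | hR
    · exact absurd (LinearMap.range_eq_bot.mp (congr_arg Subrepresentation.toSubmodule hR)) hψ
    · exact LinearMap.range_eq_top.mp (congr_arg Subrepresentation.toSubmodule hR)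

end Irreducible

section CyclicQuotient

variable {k G X : Type*} [Field k] [IsAlgClosed k] [Group G] [Finite G]
  [AddCommGroup X] [Module k X] [FiniteDimensional k X]

/-- The `N`-invariants are stable under `G`, and an eigenvector of a generator of `G ⧸ N`
is an eigenvector of all of `G`. -/
theorem exists_mem_invariants_forall_apply_eq_smul (π : Representation k G X) (N : Subgroup G)
    [N.Normal] [IsCyclic (G ⧸ N)] (h : invariants (π.comp N.subtype) ≠ ⊥) :
    ∃ v ∈ invariants (π.comp N.subtype), v ≠ 0 ∧ ∀ g, ∃ c : k, π g v = c • v := by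
  set E := invariants (π.comp N.subtype)
  have hfix : ∀ v ∈ E, ∀ n ∈ N, π n v = v := fun v hv n hn ↦ hv ⟨n, hn⟩
  obtain ⟨t, ht⟩ := IsCyclic.exists_monoid_generator (α := G ⧸ N)
  obtain ⟨g₀, rfl⟩ := QuotientGroup.mk_surjective t
  have hE : ∀ v ∈ E, π g₀ v ∈ E := fun v hv n ↦ by
    have hn : g₀⁻¹ * n * g₀ ∈ N := by simpa using ‹N.Normal›.conj_mem' n n.2 g₀
    calc π n (π g₀ v) = π g₀ (π (g₀⁻¹ * n * g₀) v) := by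
          simp only [map_mul, Module.End.mul_apply, self_inv_apply]
      _ = π g₀ v := by rw [hfix v hv _ hn]
  have : Nontrivial E := Submodule.nontrivial_iff_ne_bot.mpr h
  obtain ⟨c, hc⟩ := Module.End.exists_eigenvalue ((π g₀).restrict hE)
  obtain ⟨⟨v, hvE⟩, hv⟩ := hc.exists_hasEigenvector
  have hg₀v : π g₀ v = c • v := congr_arg Subtype.val hv.apply_eq_smul
  have hpow : ∀ m : ℕ, π (g₀ ^ m) v = c ^ m • v := by
    intro m
    induction m with
    | zero => simp
    | succ m ih =>
      rw [pow_succ, map_mul, Module.End.mul_apply, hg₀v, map_smul, ih, smul_smul, ← pow_succ']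
  refine ⟨v, hvE, fun h0 ↦ hv.2 (Subtype.ext h0), fun g ↦ ?_⟩
  obtain ⟨m, hm⟩ := ht g
  have hn : (g₀ ^ m)⁻¹ * g ∈ N := QuotientGroup.eq.mp (by simpa using hm)
  refine ⟨c ^ m, ?_⟩
  calc π g v = π (g₀ ^ m) (π ((g₀ ^ m)⁻¹ * g) v) := by
        simp only [map_mul, Module.End.mul_apply, self_inv_apply]
    _ = c ^ m • v := by rw [hfix v hvE _ hn, hpow]

variable {V W : Type*} [AddCommGroup V] [Module k V] [FiniteDimensional k V]
  [AddCommGroup W] [Module k W] [FiniteDimensional k W]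

theorem nonempty_equiv_comp_subtype_of_isCyclic {ρ : Representation k G V}
    {σ : Representation k G W} [ρ.IsIrreducible] [σ.IsIrreducible] (N : Subgroup G) [N.Normal]
    [IsCyclic (G ⧸ N)] [Nontrivial (IntertwiningMap (ρ.comp N.subtype) (σ.comp N.subtype))] :
    Nonempty (Equiv (ρ.comp N.subtype) (σ.comp N.subtype)) := by
  let e := invariantsEquivIntertwiningMap (ρ.comp N.subtype) (σ.comp N.subtype)
  have h : invariants ((linHom ρ σ).comp N.subtype) ≠ ⊥ :=
    Submodule.nontrivial_iff_ne_bot.mp e.nontrivial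
  obtain ⟨ψ, hψN, hψ0, hψ⟩ := exists_mem_invariants_forall_apply_eq_smul (linHom ρ σ) N h
  exact ⟨(e ⟨ψ, hψN⟩).ofBijective (bijective_of_forall_linHom_apply_eq_smul hψ0 hψ)⟩

end CyclicQuotient

section Character

variable {k G V V' W : Type*} [Field k] [CharZero k] [Group G] [Fintype G]
  [AddCommGroup V] [Module k V] [FiniteDimensional k V]
  [AddCommGroup V'] [Module k V'] [FiniteDimensional k V']
  [AddCommGroup W] [Module k W] [FiniteDimensional k W]

theorem finrank_intertwiningMap_eq_of_character_eq {ρ : Representation k G V}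
    {ρ' : Representation k G V'} (σ : Representation k G W) (h : ρ.character = ρ'.character) :
    finrank k (IntertwiningMap ρ σ) = finrank k (IntertwiningMap ρ' σ) := by
  have := invertibleOfNonzero (NeZero.ne (Nat.card G : k))
  exact_mod_cast (card_inv_mul_sum_char_mul_char_eq_finrank ρ σ).symm.trans
    (h ▸ card_inv_mul_sum_char_mul_char_eq_finrank ρ' σ)

end Character

end Representation

namespace FDRep

section

variable {k G : Type} [Field k] [Monoid G]

noncomputable def homOfIntertwiningMap {X Y : FDRep k G} (f : IntertwiningMap X.ρ Y.ρ) :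
    X ⟶ Y :=
  FDRep.forget₂HomLinearEquiv X Y (Rep.ofHom f)

theorem isIrreducible_of_simple (V : FDRep k G) [Simple V] : IsIrreducible V.ρ := by
  have : Nontrivial V := by
    by_contra h
    rw [not_nontrivial_iff_subsingleton] at h
    exact id_nonzero V (by ext x; exact Subsingleton.elim _ _)
  refine ⟨fun p ↦ ?_⟩
  let ι : FDRep.of p.toRepresentation ⟶ V := homOfIntertwiningMap p.subtype
  have : Mono ι := ConcreteCategory.mono_of_injective ι p.subtype_injective
  by_cases hι : ι = 0
  · left
    rw [Subrepresentation.eq_bot_iff]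
    intro v hv
    exact ConcreteCategory.congr_hom hι ⟨v, hv⟩
  · right
    have : IsIso ι := (Simple.mono_isIso_iff_nonzero ι).mpr hι
    rw [Subrepresentation.eq_top_iff']
    intro v
    obtain ⟨w, rfl⟩ := (ConcreteCategory.bijective_of_isIso ι).2 v
    exact w.2

end

theorem simple_of_isIrreducible {k G : Type} [Field k] [IsAlgClosed k] [CharZero k] [Group G]
    [Fintype G] (V : FDRep k G) [IsIrreducible V.ρ] : Simple V := by
  have := invertibleOfNonzero (NeZero.ne (Nat.card G : k))
  rw [simple_iff_char_is_norm_one]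
  have h := Representation.char_orthonormal V.ρ V.ρ
  rw [if_pos ⟨.refl _⟩, inv_mul_eq_one₀ (NeZero.ne _)] at h
  exact h.symm

end FDRep

/-- Let `G` be a finite group and `N` a normal subgroup of `G` such that `G/N` is cyclic
and every irreducible complex character of `N` is extendible to `G`.  Then for every
irreducible character `θ` of `G`, the restriction `θ|_N` is an irreducible character
of `N`. -/
theorem mckay_stmt2 (G : Type) [Group G] [Finite G] (N : Subgroup G) [N.Normal]
    (hcyc : IsCyclic (G ⧸ N))
    (hext : ∀ χ : N → ℂ, IsIrrChar N χ →
      ∃ χ' : G → ℂ, IsIrrChar G χ' ∧ ∀ x : N, χ' (x : G) = χ x)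
    (θ : G → ℂ) (hθ : IsIrrChar G θ) :
    IsIrrChar N (fun x : N => θ (x : G)) := by
  have : Fintype N := Fintype.ofFinite N
  obtain ⟨V, hV, hVθ⟩ := hθ
  have := FDRep.isIrreducible_of_simple V
  have : Nontrivial V := IsIrreducible.nontrivial (ρ := V.ρ)
  obtain ⟨p, hp⟩ :=
    Subrepresentation.exists_isIrreducible_toRepresentation (V.ρ.comp N.subtype)
  let W := FDRep.of p.toRepresentation
  have : IsIrreducible W.ρ := hp
  have hW : Simple W := FDRep.simple_of_isIrreducible W
  obtain ⟨χ, ⟨U, hU, hUχ⟩, hχW⟩ := hext W.character ⟨W, hW, fun _ ↦ rfl⟩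
  have := FDRep.isIrreducible_of_simple U
  have hchar : character (U.ρ.comp N.subtype) = p.toRepresentation.character :=
    funext fun n ↦ (hUχ n).trans (hχW n)
  have : Nontrivial (IntertwiningMap (U.ρ.comp N.subtype) (V.ρ.comp N.subtype)) := by
    rw [← finrank_pos_iff (R := ℂ), finrank_intertwiningMap_eq_of_character_eq _ hchar,
      finrank_pos_iff]
    have := IsIrreducible.nontrivial (ρ := p.toRepresentation)
    exact nontrivial_of_ne _ _ p.subtype_ne_zero
  obtain ⟨e⟩ := nonempty_equiv_comp_subtype_of_isCyclic (ρ := U.ρ) (σ := V.ρ) N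
  refine ⟨W, hW, fun n ↦ ?_⟩
  calc W.character n = character (U.ρ.comp N.subtype) n := (congr_fun hchar n).symm
    _ = character (V.ρ.comp N.subtype) n := congr_fun (char_iso e) n
    _ = θ n := hVθ n
end

section
/- Let m ≥ 1, let G be a finite subgroup of GL(m, ℂ), and let V = ℂ^m be the natural representation of G with character χ_V(g) = tr(g). Let L be a normal subgroup of G such that G/L is cyclic and every irreducible complex character of L is extendible to G. Then for every irreducible character θ of G and every irreducible character ψ of L, the sum over all irreducible characters η of G whose restriction η|_L equals ψ of the multiplicities ⟨χ_V·θ, η⟩_G equals ⟨(χ_V|_L)·(θ|_L), ψ⟩_L. (In terms of McKay quivers: the arrows of Q_G starting at θ and ending in the fiber over ψ biject with the arrows of Q_L from θ|_L to ψ.) -/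
/-!
Extend `ψ` to an irreducible character `χ` of `G`. As `G/L` is cyclic of order `n`, it has a
faithful linear character `μ`, and the twists `μᵏχ` (`k < n`) are irreducible characters of `G`
lying over `ψ`. Orthogonality of the powers of `μ` gives `∑ₖ ⟨f, μᵏχ⟩_G = ⟨f|_L, χ|_L⟩_L` for every
function `f` on `G`. Taking for `f` an irreducible character `η` over `ψ`, the right side is
`⟨ψ, ψ⟩_L = 1`, so `η = μᵏχ` for exactly one `k < n`; the fibre over `ψ` is therefore
`{μᵏχ | k < n}` without repetitions, and `f = χ_V·θ` gives the theorem.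
-/

open scoped BigOperators

/-- The inner product `⟨φ, ψ⟩_G = (1/|G|) Σ_{g ∈ G} φ(g)·conj(ψ(g))` of two
class functions on a finite group `G`. -/
noncomputable def charInner (G : Type) [Group G] (φ ψ : G → ℂ) : ℂ :=
  (Nat.card G : ℂ)⁻¹ * ∑ᶠ g : G, φ g * (starRingEnd ℂ) (ψ g)

open CategoryTheory Finset Matrix
open scoped ComplexOrder

/-- Unitary trick: `P = ∑_{k<N} (Aᵏ)ᴴ Aᵏ` is positive definite and `Aᴴ P A = P`, so
`Aᴴ = P B P⁻¹`. -/
theorem Matrix.trace_eq_star_trace_of_pow_eq_one {𝕜 n : Type*} [RCLike 𝕜] [Fintype n]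
    [DecidableEq n] {A B : Matrix n n 𝕜} {N : ℕ} (hN : N ≠ 0) (hA : A ^ N = 1)
    (hAB : A * B = 1) : B.trace = star A.trace := by
  set Q : ℕ → Matrix n n 𝕜 := fun k => (A ^ k)ᴴ * A ^ k
  set P := ∑ k ∈ range N, Q k
  have hP : P.PosDef := by
    obtain ⟨M, rfl⟩ := Nat.exists_eq_add_one_of_ne_zero hN
    rw [show P = 1 + ∑ k ∈ range M, Q (k + 1) by simp [P, Q, sum_range_succ', add_comm]]
    exact .add_posSemidef .one (posSemidef_sum _ fun k _ => posSemidef_conjTranspose_mul_self _)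
  have hPA : Aᴴ * P * A = P := by
    have hQ : Q N = Q 0 := by simp only [Q, hA, pow_zero, conjTranspose_one]
    have h := (sum_range_succ' Q N).symm.trans (sum_range_succ Q N)
    rw [hQ, add_left_inj] at h
    rw [Matrix.mul_sum, Matrix.sum_mul]
    refine (sum_congr rfl fun k _ => ?_).trans h
    simp only [Q, pow_succ, conjTranspose_mul, Matrix.mul_assoc]
  have hPB : Aᴴ * P = P * B := by
    conv_rhs => rw [← hPA, Matrix.mul_assoc _ A B, hAB, Matrix.mul_one]
  have hPu : IsUnit P.det := (isUnit_iff_isUnit_det P).mp hP.isUnit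
  calc B.trace = (P * B * P⁻¹).trace := by
        rw [trace_mul_cycle, nonsing_inv_mul _ hPu, Matrix.one_mul]
    _ = (Aᴴ * P * P⁻¹).trace := by rw [hPB]
    _ = star A.trace := by
        rw [Matrix.mul_assoc, mul_nonsing_inv _ hPu, Matrix.mul_one, trace_conjTranspose]

theorem FDRep.char_inv {𝕜 G : Type} [RCLike 𝕜] [Group G] [Finite G] (V : FDRep 𝕜 G)
    (g : G) : V.character g⁻¹ = star (V.character g) := by
  let φ := LinearMap.toMatrixAlgEquiv (Module.finBasis 𝕜 V)
  have htr (h : G) : V.character h = (φ (V.ρ h)).trace :=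
    LinearMap.trace_eq_matrix_trace 𝕜 _ _
  rw [htr, htr]
  refine trace_eq_star_trace_of_pow_eq_one (Nat.card_pos (α := G)).ne' ?_ ?_
  · rw [← map_pow, ← map_pow, pow_card_eq_one', map_one, map_one]
  · rw [← map_mul, ← map_mul, mul_inv_cancel, map_one, map_one]

namespace FDRep

variable {k G : Type} [Field k] [Group G]

noncomputable def twist (lam : G →* kˣ) (V : FDRep k G) : FDRep k G :=
  FDRep.of
    { toFun := fun g => (lam g : k) • V.ρ g
      map_one' := by simp
      map_mul' := fun g h => by
        simp only [map_mul, Units.val_mul, Module.End.mul_eq_comp, LinearMap.comp_smul,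
          LinearMap.smul_comp, smul_smul, mul_comm] }

theorem char_twist (lam : G →* kˣ) (V : FDRep k G) (g : G) :
    (V.twist lam).character g = lam g * V.character g :=
  map_smul (LinearMap.trace k V) _ _

theorem simple_twist_s4 [IsAlgClosed k] [CharZero k] [Finite G] (lam : G →* kˣ) (V : FDRep k G)
    [hV : Simple V] : Simple (V.twist lam) := by
  have := Fintype.ofFinite G
  rw [simple_iff_char_is_norm_one] at hV ⊢
  refine .trans (sum_congr rfl fun g _ => ?_) hV
  rw [char_twist, char_twist, map_inv, mul_mul_mul_comm, Units.mul_inv, one_mul]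

end FDRep

theorem charInner_eq_sum {H : Type} [Group H] [Fintype H] (φ ψ : H → ℂ) :
    charInner H φ ψ = (Nat.card H : ℂ)⁻¹ * ∑ g, φ g * (starRingEnd ℂ) (ψ g) := by
  rw [charInner, finsum_eq_sum_of_fintype]

section CharInner

variable {H : Type} [Group H] [Finite H]

open scoped Classical in
theorem charInner_character (V W : FDRep ℂ H) [Simple V] [Simple W] :
    charInner H V.character W.character = if Nonempty (V ≅ W) then 1 else 0 := by
  have := Fintype.ofFinite H
  have := invertibleOfNonzero (NeZero.ne (Nat.card H : ℂ))
  rw [charInner_eq_sum, ← FDRep.char_orthonormal]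
  simp only [FDRep.char_inv, Complex.star_def]

open scoped Classical in
theorem IsIrrChar.charInner_eq {χ χ' : H → ℂ} (hχ : IsIrrChar H χ) (hχ' : IsIrrChar H χ') :
    charInner H χ χ' = if χ = χ' then 1 else 0 := by
  obtain ⟨V, _, rfl⟩ : ∃ V : FDRep ℂ H, Simple V ∧ V.character = χ :=
    hχ.imp fun V hV => ⟨hV.1, funext hV.2⟩
  obtain ⟨W, _, rfl⟩ : ∃ W : FDRep ℂ H, Simple W ∧ W.character = χ' :=
    hχ'.imp fun W hW => ⟨hW.1, funext hW.2⟩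
  have hself : charInner H W.character W.character = 1 := by
    rw [charInner_character, if_pos ⟨Iso.refl W⟩]
  by_cases hVW : Nonempty (V ≅ W)
  · rw [if_pos (FDRep.char_iso hVW.some), ← hself, FDRep.char_iso hVW.some]
  · rw [charInner_character, if_neg hVW, if_neg]
    intro h
    have h0 := charInner_character V W
    rw [if_neg hVW, h, hself] at h0
    exact one_ne_zero h0

theorem IsIrrChar.charInner_self {χ : H → ℂ} (hχ : IsIrrChar H χ) : charInner H χ χ = 1 := by
  rw [hχ.charInner_eq hχ, if_pos rfl]

theorem IsIrrChar.twist {χ : H → ℂ} (hχ : IsIrrChar H χ) (lam : H →* ℂˣ) :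
    IsIrrChar H (fun g => lam g * χ g) := by
  obtain ⟨V, hV, hVχ⟩ := hχ
  exact ⟨V.twist lam, FDRep.simple_twist_s4 lam V, fun g => by rw [FDRep.char_twist, hVχ]⟩

theorem IsIrrChar.sum_charInner_eq_card {ι : Type*} [DecidableEq (H → ℂ)] {η : H → ℂ}
    (hη : IsIrrChar H η) {s : Finset ι} {F : ι → H → ℂ} (hF : ∀ i ∈ s, IsIrrChar H (F i)) :
    ∑ i ∈ s, charInner H η (F i) = #{i ∈ s | F i = η} := by
  rw [← sum_boole]
  refine sum_congr rfl fun i hi => ?_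
  rw [hη.charInner_eq (hF i hi)]
  by_cases h : F i = η <;> simp [h, Ne.symm]

end CharInner

theorem IsCyclic.exists_injective_monoidHom_units (Q : Type*) [Group Q] [Finite Q] [IsCyclic Q] :
    ∃ μ : Q →* ℂˣ, Function.Injective μ := by
  have : NeZero (Nat.card Q) := ⟨Nat.card_pos.ne'⟩
  let e : Q ≃* rootsOfUnity (Nat.card Q) ℂ :=
    mulEquivOfCyclicCardEq (Complex.card_rootsOfUnity _).symm
  exact ⟨(rootsOfUnity _ ℂ).subtype.comp e.toMonoidHom, Subtype.val_injective.comp e.injective⟩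

theorem sum_range_card_pow_eq_ite {Q K : Type*} [Group Q] [Finite Q] [DecidableEq Q] [Field K]
    {μ : Q →* Kˣ} (hμ : Function.Injective μ) (q : Q) :
    ∑ k ∈ range (Nat.card Q), (μ q : K) ^ k = if q = 1 then (Nat.card Q : K) else 0 := by
  split_ifs with hq
  · simp [hq]
  · have hne : (μ q : K) ≠ 1 := by
      rwa [Ne, Units.val_eq_one, ← map_one μ, hμ.eq_iff]
    rw [geom_sum_eq hne, ← Units.val_pow_eq_pow_val, ← map_pow, pow_card_eq_one', map_one,
      Units.val_one, sub_self, zero_div]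

theorem sum_charInner_twist_pow {H : Type} [Group H] [Finite H] (L : Subgroup H) [L.Normal]
    {μ : H ⧸ L →* ℂˣ} (hμ : Function.Injective μ) (f χ : H → ℂ) :
    ∑ k ∈ range (Nat.card (H ⧸ L)), charInner H f (fun g => (μ g : ℂ) ^ k * χ g)
      = charInner L (fun x => f x) (fun x => χ x) := by
  classical
  have := Fintype.ofFinite H
  set n := Nat.card (H ⧸ L)
  have hcard : (Nat.card H : ℂ) = n * Nat.card L := by
    exact_mod_cast L.card_eq_card_quotient_mul_card_subgroup
  have hn : (n : ℂ) ≠ 0 := NeZero.ne _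
  have hsum (g : H) : ∑ k ∈ range n, f g * (starRingEnd ℂ) ((μ g : ℂ) ^ k * χ g)
      = if g ∈ L then n * (f g * (starRingEnd ℂ) (χ g)) else 0 := by
    have hfactor : ∑ k ∈ range n, f g * (starRingEnd ℂ) ((μ g : ℂ) ^ k * χ g)
        = f g * (starRingEnd ℂ) (χ g) * (starRingEnd ℂ) (∑ k ∈ range n, (μ g : ℂ) ^ k) := by
      rw [map_sum, mul_sum]
      exact sum_congr rfl fun k _ => by rw [map_mul]; ring
    rw [hfactor, sum_range_card_pow_eq_ite hμ]
    simp only [QuotientGroup.eq_one_iff]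
    split_ifs <;> simp [n, mul_comm]
  simp_rw [charInner_eq_sum, ← mul_sum]
  rw [sum_comm, sum_congr rfl fun g _ => hsum g, ← sum_filter, hcard, mul_inv, mul_assoc,
    ← mul_sum, mul_left_comm, inv_mul_cancel_left₀ hn]
  exact congrArg _ (sum_subtype _ (by simp) _)

theorem finsum_mem_eq_sum_of_card_filter_eq_one {α ι M : Type*} [AddCommMonoid M]
    [DecidableEq α] {S : Set α} {s : Finset ι} {F : ι → α} (hF : ∀ i ∈ s, F i ∈ S)
    (hS : ∀ a ∈ S, #{i ∈ s | F i = a} = 1) (c : α → M) :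
    ∑ᶠ a ∈ S, c a = ∑ i ∈ s, c (F i) := by
  have hSF : S = ↑(s.image F) := by
    ext a
    refine ⟨fun ha => ?_, ?_⟩
    · obtain ⟨i, hi⟩ := card_pos.mp ((hS a ha).symm ▸ Nat.one_pos)
      exact mem_image.mpr ⟨i, mem_filter.mp hi⟩
    · simp only [coe_image, Set.mem_image, mem_coe]
      rintro ⟨i, hi, rfl⟩
      exact hF i hi
  have hinj : Set.InjOn F s := fun i hi j hj hij =>
    card_le_one.mp (hS _ (hF i hi)).le i (mem_filter.mpr ⟨hi, rfl⟩) j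
      (mem_filter.mpr ⟨hj, hij.symm⟩)
  rw [hSF, finsum_mem_coe_finset, sum_image hinj]

theorem mckay_stmt4_general (m : ℕ)
    (G : Subgroup (Matrix.GeneralLinearGroup (Fin m) ℂ)) [Finite G]
    (χV : G → ℂ)
    (L : Subgroup G) [L.Normal]
    (hcyc : IsCyclic (G ⧸ L))
    (hext : ∀ χ : L → ℂ, IsIrrChar L χ →
      ∃ χ' : G → ℂ, IsIrrChar G χ' ∧ ∀ x : L, χ' (x : G) = χ x)
    (θ : G → ℂ)
    (ψ : L → ℂ) (hψ : IsIrrChar L ψ) :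
    (∑ᶠ η ∈ {η : G → ℂ | IsIrrChar G η ∧ ∀ x : L, η (x : G) = ψ x},
        charInner G (fun g => χV g * θ g) η)
      = charInner L (fun x : L => χV (x : G) * θ (x : G)) ψ := by
  classical
  obtain ⟨χ, hχ, hχψ⟩ := hext ψ hψ
  obtain ⟨μ, hμ⟩ := IsCyclic.exists_injective_monoidHom_units (G ⧸ L)
  set F : ℕ → G → ℂ := fun k g => (μ g : ℂ) ^ k * χ g
  have hFψ (k : ℕ) (x : L) : F k x = ψ x := by
    simp [F, (QuotientGroup.eq_one_iff _).mpr x.2, hχψ]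
  have hFirr (k : ℕ) : IsIrrChar G (F k) := by
    simpa [F] using hχ.twist ((μ.comp (QuotientGroup.mk' L)) ^ k)
  have hfibre (η : G → ℂ) (hη : ∀ x : L, η x = ψ x) :
      ∑ k ∈ range (Nat.card (G ⧸ L)), charInner G η (F k) = 1 := by
    rw [sum_charInner_twist_pow L hμ, funext hη, funext hχψ, hψ.charInner_self]
  rw [finsum_mem_eq_sum_of_card_filter_eq_one (s := range (Nat.card (G ⧸ L))) (F := F) ?_ ?_,
    sum_charInner_twist_pow L hμ, funext hχψ]
  · exact fun k _ => ⟨hFirr k, hFψ k⟩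
  · rintro η ⟨hη, hηψ⟩
    exact_mod_cast (hη.sum_charInner_eq_card fun k _ => hFirr k).symm.trans (hfibre η hηψ)

/-- Let `m ≥ 1`, let `G` be a finite subgroup of `GL(m, ℂ)`, and let `χ_V(g) = tr(g)` be
the character of the natural representation `V = ℂ^m`.  Let `L` be a normal subgroup of
`G` such that `G/L` is cyclic and every irreducible complex character of `L` is extendible
to `G`.  Then for every irreducible character `θ` of `G` and every irreducible character
`ψ` of `L`, the sum over all irreducible characters `η` of `G` with `η|_L = ψ` of the
multiplicities `⟨χ_V·θ, η⟩_G` equals `⟨(χ_V|_L)·(θ|_L), ψ⟩_L`. -/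
theorem mckay_stmt4 (m : ℕ) (hm : 1 ≤ m)
    (G : Subgroup (Matrix.GeneralLinearGroup (Fin m) ℂ)) [Finite G]
    (χV : G → ℂ)
    (hχV : ∀ g : G,
      χV g = ((g : Matrix.GeneralLinearGroup (Fin m) ℂ) : Matrix (Fin m) (Fin m) ℂ).trace)
    (L : Subgroup G) [L.Normal]
    (hcyc : IsCyclic (G ⧸ L))
    (hext : ∀ χ : L → ℂ, IsIrrChar L χ →
      ∃ χ' : G → ℂ, IsIrrChar G χ' ∧ ∀ x : L, χ' (x : G) = χ x)
    (θ : G → ℂ) (hθ : IsIrrChar G θ)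
    (ψ : L → ℂ) (hψ : IsIrrChar L ψ) :
    (∑ᶠ η ∈ {η : G → ℂ | IsIrrChar G η ∧ ∀ x : L, η (x : G) = ψ x},
        charInner G (fun g => χV g * θ g) η)
      = charInner L (fun x : L => χV (x : G) * θ (x : G)) ψ :=
  mckay_stmt4_general m G χV L hcyc hext θ ψ hψ
end
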